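/- Let 𝒟 ⊆ 𝒞 be subcategories of 𝓑 satisfying condition (RCP), and set ℋ_𝒟 := CoCone(𝒟,𝒞). Then every object X of 𝓑 admits a short exact sequence 0→Z→Y→f→X→0 in which Y ∈ ℋ_𝒟, the morphism f is a right ℋ_𝒟-approximation of X, and Z ∈ 𝒟^⊥¹. Moreover, for this f: any morphism x' : X → X' such that x'∘f factors through an object of 𝒞^⊥¹ itself factors through an object of 𝒞^⊥¹. -/

import Mathlib

open CategoryTheory Category Limits ZeroObject

universe v u

namespace CotorsionPaper

variable {B : Type u} [Category.{v} B] [Abelian B]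

/-- `f, g` form a short exact sequence `0 → X → Y → Z → 0`. -/
def IsSES {X Y Z : B} (f : X ⟶ Y) (g : Y ⟶ Z) : Prop :=
  ∃ w : f ≫ g = 0, (ShortComplex.mk f g w).ShortExact

/-- `Ext¹(X, Y) = 0`: every short exact sequence `0 → Y → E → X → 0` splits. -/
def Ext1Zero (X Y : B) : Prop :=
  ∀ ⦃E : B⦄ (i : Y ⟶ E) (p : E ⟶ X), IsSES i p → ∃ s : X ⟶ E, s ≫ p = 𝟙 X

/-- `Ext²(X, Y) = 0`, via dimension shifting: `Ext¹(K, Y) = 0` for any syzygy `K` of `X`. -/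
def Ext2Zero (X Y : B) : Prop :=
  ∀ ⦃K P : B⦄ (i : K ⟶ P) (p : P ⟶ X), Projective P → IsSES i p → Ext1Zero K Y

/-- A (strictly) full additive subcategory: closed under isomorphisms,
contains a zero object and is closed under finite direct sums. -/
structure AddSubcat (S : Set B) : Prop where
  zero_mem : (0 : B) ∈ S
  iso_closed : ∀ ⦃X Y : B⦄, (X ≅ Y) → X ∈ S → Y ∈ S
  sum_closed : ∀ ⦃X Y : B⦄, X ∈ S → Y ∈ S → (X ⊞ Y) ∈ S

/-- `S` is closed under direct summands (retracts). -/
def ClosedUnderSummands (S : Set B) : Prop :=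
  ∀ ⦃X Y : B⦄ (r : X ⟶ Y) (s : Y ⟶ X), s ≫ r = 𝟙 Y → X ∈ S → Y ∈ S

/-- `S` is rigid: `Ext¹(X, Y) = 0` for all `X, Y ∈ S`. -/
def Rigid (S : Set B) : Prop :=
  ∀ ⦃X⦄, X ∈ S → ∀ ⦃Y⦄, Y ∈ S → Ext1Zero X Y

/-- `S^⊥¹`. -/
def rightPerp (S : Set B) : Set B := {Y | ∀ ⦃X⦄, X ∈ S → Ext1Zero X Y}

/-- `^⊥¹S`. -/
def leftPerp (S : Set B) : Set B := {X | ∀ ⦃Y⦄, Y ∈ S → Ext1Zero X Y}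

/-- `f : X ⟶ A` is a right `S`-approximation of `A`. -/
def IsRightApprox (S : Set B) {X A : B} (f : X ⟶ A) : Prop :=
  X ∈ S ∧ ∀ ⦃X' : B⦄, X' ∈ S → ∀ g : X' ⟶ A, ∃ h : X' ⟶ X, h ≫ f = g

def ContravariantlyFinite (S : Set B) : Prop :=
  ∀ A : B, ∃ (X : B) (f : X ⟶ A), IsRightApprox S f

/-- `f : A ⟶ X` is a left `S`-approximation of `A`. -/
def IsLeftApprox (S : Set B) {A X : B} (f : A ⟶ X) : Prop :=
  X ∈ S ∧ ∀ ⦃X' : B⦄, X' ∈ S → ∀ g : A ⟶ X', ∃ h : X ⟶ X', f ≫ h = g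

def CovariantlyFinite (S : Set B) : Prop :=
  ∀ A : B, ∃ (X : B) (f : A ⟶ X), IsLeftApprox S f

/-- `(U, V)` is a cotorsion pair. -/
structure CotorsionPair (U V : Set B) : Prop where
  summands_left : ClosedUnderSummands U
  summands_right : ClosedUnderSummands V
  ext : ∀ ⦃X⦄, X ∈ U → ∀ ⦃Y⦄, Y ∈ V → Ext1Zero X Y
  resol : ∀ X : B, ∃ (VX UX : B) (i : VX ⟶ UX) (p : UX ⟶ X),
    VX ∈ V ∧ UX ∈ U ∧ IsSES i p
  coresol : ∀ X : B, ∃ (VX UX : B) (i : X ⟶ VX) (p : VX ⟶ UX),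
    VX ∈ V ∧ UX ∈ U ∧ IsSES i p

/-- `CoCone(S, T)`. -/
def CoCone (S T : Set B) : Set B :=
  {X | ∃ (B' B'' : B) (i : X ⟶ B') (p : B' ⟶ B''), B' ∈ S ∧ B'' ∈ T ∧ IsSES i p}

/-- `Cone(S, T)`. -/
def Cone (S T : Set B) : Set B :=
  {X | ∃ (B' B'' : B) (i : B' ⟶ B'') (p : B'' ⟶ X), B' ∈ S ∧ B'' ∈ T ∧ IsSES i p}

/-- The subcategory `𝒫` of projective objects. -/
def projSet : Set B := {P | Projective P}

/-- The subcategory `ℐ` of injective objects. -/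
def injSet : Set B := {I | Injective I}

/-- `Ω𝒞`, the (first) syzygy of `𝒞`. -/
def Syz (C : Set B) : Set B := CoCone projSet C

/-- Condition (RCP): `𝒫 ⊆ 𝒞`, `𝒞` rigid, contravariantly finite,
closed under direct summands (and a full additive subcategory). -/
structure RCP (C : Set B) : Prop where
  add : AddSubcat C
  proj_mem : ∀ ⦃P : B⦄, Projective P → P ∈ C
  rigid : Rigid C
  contra : ContravariantlyFinite C
  summands : ClosedUnderSummands C

/-- `f` factors through an object of `S`. -/
def FactorsThru (S : Set B) {X Y : B} (f : X ⟶ Y) : Prop :=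
  ∃ (Z : B) (g : X ⟶ Z) (h : Z ⟶ Y), Z ∈ S ∧ g ≫ h = f

/-- The ideal of morphisms of the full subcategory on `H` factoring through an object of `S`. -/
def idealRel (H S : Set B) : HomRel (ObjectProperty.FullSubcategory (fun X => X ∈ H)) :=
  fun X Y f g => FactorsThru S (show X.obj ⟶ Y.obj from f.hom - g.hom)

/-- The ideal quotient `H/S`. -/
abbrev HeartCat (H S : Set B) := CategoryTheory.Quotient (idealRel H S)

/-- The quotient functor `H → H/S`. -/
abbrev heartQ (H S : Set B) : ObjectProperty.FullSubcategory (fun X => X ∈ H) ⥤ HeartCat H S :=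
  CategoryTheory.Quotient.functor _

/-- The zero morphism in the ideal quotient `H/S`. -/
def heartZero (H S : Set B) (X Y : HeartCat H S) : X ⟶ Y :=
  (heartQ H S).map (0 : X.as ⟶ Y.as)

/-- `κ` is a kernel of `φ` in the ideal quotient `H/S`. -/
structure IsKernelArrow {H S : Set B} {K X Y : HeartCat H S}
    (κ : K ⟶ X) (φ : X ⟶ Y) : Prop where
  w : κ ≫ φ = heartZero H S K Y
  lift : ∀ ⦃T : HeartCat H S⦄ (t : T ⟶ X), t ≫ φ = heartZero H S T Y →
    ∃! u : T ⟶ K, u ≫ κ = t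

/-- `π` is a cokernel of `φ` in the ideal quotient `H/S`. -/
structure IsCokernelArrow {H S : Set B} {X Y Q : HeartCat H S}
    (φ : X ⟶ Y) (π : Y ⟶ Q) : Prop where
  w : φ ≫ π = heartZero H S X Q
  desc : ∀ ⦃T : HeartCat H S⦄ (t : Y ⟶ T), φ ≫ t = heartZero H S X T →
    ∃! u : Q ⟶ T, π ≫ u = t

/-- The class of epimorphisms in `H/S` whose kernel object lies in `A`. -/
def epiClassWithKernelIn (H S A : Set B) : MorphismProperty (HeartCat H S) :=
  fun X Y φ => Epi φ ∧ ∃ (K : HeartCat H S) (κ : K ⟶ X),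
    K.as.obj ∈ A ∧ IsKernelArrow κ φ

/-- The class of monomorphisms in `H/S` whose cokernel object lies in `A`. -/
def monoClassWithCokernelIn (H S A : Set B) : MorphismProperty (HeartCat H S) :=
  fun X Y φ => Mono φ ∧ ∃ (Q : HeartCat H S) (π : Y ⟶ Q),
    Q.as.obj ∈ A ∧ IsCokernelArrow φ π

/-- The diagram `(⋄)` associated with a morphism `f : Y ⟶ X`. -/
structure DiamondDiagram {Y X : B} (f : Y ⟶ X) {OmX PX Z₁ IY SgY Z₂ : B}
    (q : OmX ⟶ PX) (p : PX ⟶ X) (j : OmX ⟶ Z₁) (g : Z₁ ⟶ Y)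
    (i : Y ⟶ IY) (c : IY ⟶ SgY) (h : X ⟶ Z₂) (e : Z₂ ⟶ SgY)
    (u : Z₁ ⟶ PX) (v : IY ⟶ Z₂) : Prop where
  projPX : Projective PX
  injIY : Injective IY
  ses_proj : IsSES q p
  ses_pullback : IsSES j g
  ses_inj : IsSES i c
  ses_pushout : IsSES h e
  comm₁ : j ≫ u = q
  comm₂ : u ≫ p = g ≫ f
  comm₃ : f ≫ h = i ≫ v
  comm₄ : v ≫ e = c

/-- The class of morphisms `f : Y ⟶ X` admitting a diagram `(⋄)` with
`Z₁ ∈ ZCond` and `h` factoring through an object of `HCond`. -/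
def Rclass (ZCond HCond : Set B) : MorphismProperty B :=
  fun Y X f => ∃ (OmX PX Z₁ IY SgY Z₂ : B) (q : OmX ⟶ PX) (p : PX ⟶ X)
    (j : OmX ⟶ Z₁) (g : Z₁ ⟶ Y) (i : Y ⟶ IY) (c : IY ⟶ SgY)
    (h : X ⟶ Z₂) (e : Z₂ ⟶ SgY) (u : Z₁ ⟶ PX) (v : IY ⟶ Z₂),
    DiamondDiagram f q p j g i c h e u v ∧ Z₁ ∈ ZCond ∧ FactorsThru HCond h

/-- The class of morphisms `f : Y ⟶ X` admitting a diagram `(⋄)` with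
`g` factoring through an object of `GCond` and `h` through an object of `HCond`. -/
def RtildeClass (GCond HCond : Set B) : MorphismProperty B :=
  fun Y X f => ∃ (OmX PX Z₁ IY SgY Z₂ : B) (q : OmX ⟶ PX) (p : PX ⟶ X)
    (j : OmX ⟶ Z₁) (g : Z₁ ⟶ Y) (i : Y ⟶ IY) (c : IY ⟶ SgY)
    (h : X ⟶ Z₂) (e : Z₂ ⟶ SgY) (u : Z₁ ⟶ PX) (v : IY ⟶ Z₂),
    DiamondDiagram f q p j g i c h e u v ∧ FactorsThru GCond g ∧ FactorsThru HCond h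

/-- The objects of the heart `ℋ` of a cotorsion pair `(U, V)`. -/
def HeartObjects (U V : Set B) : Set B :=
  {X | (∃ (VX UX : B) (i : VX ⟶ UX) (p : UX ⟶ X),
          IsSES i p ∧ VX ∈ V ∧ UX ∈ U ∩ V) ∧
       (∃ (VX UX : B) (i : X ⟶ VX) (p : VX ⟶ UX),
          IsSES i p ∧ VX ∈ U ∩ V ∧ UX ∈ U)}

/-!
Coresolve `X` by `0 → X → Z → C' → 0` with `Z ∈ 𝒞^⊥¹` and `C' ∈ 𝒞`: `Z` is the pullback of the
injective hull `X → I → ΣX` along a right `𝒞`-approximation of `ΣX` with kernel in `𝒞^⊥¹`.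
Pulling a right `𝒟`-approximation `D₁ → Z` with kernel in `𝒟^⊥¹` back along `X → Z` gives
`f : Y → X` with the same kernel, and `0 → Y → D₁ → C' → 0` shows `Y ∈ ℋ_𝒟`. Since
`Ext¹(𝒞, Z) = 0`, maps from `ℋ_𝒟` to `X` lift through `Y`. Both sequences ending in `C'` have the
same extension class, so if `f ≫ x'` factors through `𝒞^⊥¹` then `x'` extends along `X → Z`.
-/

namespace IsSES

variable {X Y Z : B} {f : X ⟶ Y} {g : Y ⟶ Z}

theorem zero (h : IsSES f g) : f ≫ g = 0 := h.1

theorem mono (h : IsSES f g) : Mono f := h.2.mono_f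

theorem epi (h : IsSES f g) : Epi g := h.2.epi_g

theorem exists_lift (h : IsSES f g) {A : B} (k : A ⟶ Y) (hk : k ≫ g = 0) :
    ∃ l : A ⟶ X, l ≫ f = k := by
  have := h.mono
  exact h.2.exact.lift' k hk

theorem exists_desc (h : IsSES f g) {A : B} (k : Y ⟶ A) (hk : f ≫ k = 0) :
    ∃ l : Z ⟶ A, g ≫ l = k := by
  have := h.epi
  exact h.2.exact.desc' k hk

theorem of_exists_lift [Mono f] [Epi g] (w : f ≫ g = 0)
    (h : ∀ ⦃A : B⦄ (k : A ⟶ Y), k ≫ g = 0 → ∃ l : A ⟶ X, l ≫ f = k) : IsSES f g :=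
  ⟨w, .mk' (ShortComplex.exact_of_f_is_kernel _ (KernelFork.IsLimit.ofι' f w
    fun k hk => ⟨(h k hk).choose, (h k hk).choose_spec⟩)) ‹_› ‹_›⟩

theorem of_exists_desc [Mono f] [Epi g] (w : f ≫ g = 0)
    (h : ∀ ⦃A : B⦄ (k : Y ⟶ A), f ≫ k = 0 → ∃ l : Z ⟶ A, g ≫ l = k) : IsSES f g :=
  ⟨w, .mk' (ShortComplex.exact_of_g_is_cokernel _ (CokernelCofork.IsColimit.ofπ' g w
    fun k hk => ⟨(h k hk).choose, (h k hk).choose_spec⟩)) ‹_› ‹_›⟩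

theorem kernel_ι [Epi g] : IsSES (kernel.ι g) g :=
  ⟨kernel.condition g,
    .mk' (ShortComplex.exact_of_f_is_kernel _ (kernelIsKernel g)) inferInstance ‹_›⟩

theorem cokernel_π [Mono f] : IsSES f (cokernel.π f) :=
  ⟨cokernel.condition f,
    .mk' (ShortComplex.exact_of_g_is_cokernel _ (cokernelIsCokernel f)) ‹_› inferInstance⟩

theorem exists_section_of_retraction (h : IsSES f g) {r : Y ⟶ X} (hr : f ≫ r = 𝟙 X) :
    ∃ s : Z ⟶ Y, s ≫ g = 𝟙 Z :=
  ⟨_, (ShortComplex.Splitting.ofExactOfRetraction _ h.2.exact r hr h.epi).s_g⟩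

theorem exists_retraction_of_section (h : IsSES f g) {s : Z ⟶ Y} (hs : s ≫ g = 𝟙 Z) :
    ∃ r : Y ⟶ X, f ≫ r = 𝟙 X :=
  ⟨_, (ShortComplex.Splitting.ofExactOfSection _ h.2.exact s hs h.mono).f_r⟩

theorem exists_isSES_of_isPullback (h : IsSES f g) {T P : B} {y : T ⟶ Z} {fst : P ⟶ Y}
    {snd : P ⟶ T} (hP : IsPullback fst snd g y) : ∃ l : X ⟶ P, l ≫ fst = f ∧ IsSES l snd := by
  have := h.mono
  have := h.epi
  have : Epi snd := Abelian.epi_snd_of_isLimit g y hP.isLimit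
  let l := hP.lift f 0 (by rw [h.zero, zero_comp])
  have hl : l ≫ fst = f := hP.lift_fst _ _ _
  have : Mono l := mono_of_mono_fac hl
  refine ⟨l, hl, of_exists_lift (hP.lift_snd _ _ _) fun A u hu => ?_⟩
  obtain ⟨v, hv⟩ := h.exists_lift (u ≫ fst) (by rw [assoc, hP.w, reassoc_of% hu, zero_comp])
  exact ⟨v, hP.hom_ext (by rw [assoc, hl, hv]) (by rw [assoc, hP.lift_snd, comp_zero, hu])⟩

theorem exists_isSES_of_isPushout (h : IsSES f g) {T Q : B} {t : X ⟶ T} {inl : Y ⟶ Q}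
    {inr : T ⟶ Q} (hQ : IsPushout f t inl inr) : ∃ d : Q ⟶ Z, inl ≫ d = g ∧ IsSES inr d := by
  have := h.mono
  have := h.epi
  have : Mono inr := Abelian.mono_inr_of_isColimit f t hQ.isColimit
  let d := hQ.desc g 0 (by rw [h.zero, comp_zero])
  have hd : inl ≫ d = g := hQ.inl_desc _ _ _
  have : Epi d := epi_of_epi_fac hd
  refine ⟨d, hd, of_exists_desc (hQ.inr_desc _ _ _) fun A u hu => ?_⟩
  obtain ⟨v, hv⟩ := h.exists_desc (inl ≫ u) (by rw [← assoc, hQ.w, assoc, hu, comp_zero])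
  exact ⟨v, hQ.hom_ext (by rw [← assoc, hd, hv]) (by rw [← assoc, hQ.inr_desc, zero_comp, hu])⟩

theorem isSES_fst_comp_of_isPullback (h : IsSES f g) {E P : B} {d : E ⟶ Y} [Epi d]
    {fst : P ⟶ E} {snd : P ⟶ X} (hP : IsPullback fst snd d f) : IsSES fst (d ≫ g) := by
  have := h.mono
  have := h.epi
  have : Mono fst := hP.mono_fst_of_mono
  refine of_exists_lift (by rw [reassoc_of% hP.w, h.zero, comp_zero]) fun A u hu => ?_
  obtain ⟨w, hw⟩ := h.exists_lift (u ≫ d) (by rw [assoc, hu])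
  exact ⟨hP.lift u w hw.symm, hP.lift_fst _ _ _⟩

theorem isSES_comp_inl_of_isPushout (h : IsSES f g) {E Q : B} {m : Y ⟶ E} [Mono m]
    {inl : E ⟶ Q} {inr : Z ⟶ Q} (hQ : IsPushout m g inl inr) : IsSES (f ≫ m) inl := by
  have := h.mono
  have := h.epi
  have : Epi inl := hQ.epi_inl_of_epi
  refine of_exists_desc (by rw [assoc, hQ.w, ← assoc, h.zero, zero_comp]) fun A u hu => ?_
  obtain ⟨w, hw⟩ := h.exists_desc (m ≫ u) (by rw [← assoc, hu])
  exact ⟨hQ.desc u w hw.symm, hQ.inl_desc _ _ _⟩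

end IsSES

theorem Ext1Zero.exists_lift {T K : B} (hT : Ext1Zero T K) {E X : B} {k : K ⟶ E} {g : E ⟶ X}
    (h : IsSES k g) (y : T ⟶ X) : ∃ l : T ⟶ E, l ≫ g = y := by
  obtain ⟨l, -, hl⟩ := h.exists_isSES_of_isPullback (IsPullback.of_hasPullback g y)
  obtain ⟨s, hs⟩ := hT l _ hl
  exact ⟨s ≫ pullback.fst g y, by rw [assoc, pullback.condition, reassoc_of% hs]⟩

theorem Ext1Zero.exists_extend {C T : B} (hC : Ext1Zero C T) {A E : B} {a : A ⟶ E}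
    {b : E ⟶ C} (h : IsSES a b) (t : A ⟶ T) : ∃ t' : E ⟶ T, a ≫ t' = t := by
  obtain ⟨d, -, hd⟩ := h.exists_isSES_of_isPushout (IsPushout.of_hasPushout a t)
  obtain ⟨s, hs⟩ := hC _ d hd
  obtain ⟨r, hr⟩ := hd.exists_retraction_of_section hs
  exact ⟨pushout.inl a t ≫ r, by rw [← assoc, pushout.condition, assoc, hr, comp_id]⟩

theorem ext1Zero_of_injective (X : B) {I : B} [Injective I] : Ext1Zero X I :=
  fun _ i _ h => by
    have := h.mono
    exact h.exists_section_of_retraction (Injective.comp_factorThru (𝟙 I) i)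

theorem mem_rightPerp_of_isSES {S : Set B} {A M C : B} {a : A ⟶ M} {b : M ⟶ C}
    (h : IsSES a b) (hA : A ∈ rightPerp S) (hC : C ∈ rightPerp S) : M ∈ rightPerp S := by
  intro X hX E m p hmp
  have := hmp.mono
  have hQ := IsPushout.of_hasPushout m b
  obtain ⟨d, hd, hCQX⟩ := hmp.exists_isSES_of_isPushout hQ
  obtain ⟨s, hs⟩ := hC hX _ d hCQX
  obtain ⟨l, hl⟩ := (hA hX).exists_lift (h.isSES_comp_inl_of_isPushout hQ) s
  exact ⟨l, by rw [← hd, reassoc_of% hl, hs]⟩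

/-- Wakamatsu's lemma. -/
theorem mem_rightPerp_of_isRightApprox {S : Set B} (hS : Rigid S) {V S₀ X : B} {k : V ⟶ S₀}
    {α : S₀ ⟶ X} (hα : IsRightApprox S α) (h : IsSES k α) : V ∈ rightPerp S := by
  intro S' hS' E a b hab
  have := h.mono
  obtain ⟨φ, hφ⟩ := (hS hS' hα.1).exists_extend hab k
  obtain ⟨t, ht⟩ := hab.exists_desc (φ ≫ α) (by rw [reassoc_of% hφ, h.zero])
  obtain ⟨t', ht'⟩ := hα.2 hS' t
  obtain ⟨ρ, hρ⟩ := h.exists_lift (φ - b ≫ t')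
    (by rw [Preadditive.sub_comp, assoc, ht', ht, sub_self])
  refine hab.exists_section_of_retraction (r := ρ) ?_
  rw [← cancel_mono k, assoc, hρ, Preadditive.comp_sub, hφ, reassoc_of% hab.zero, zero_comp,
    sub_zero, id_comp]

theorem RCP.exists_isSES_isRightApprox {S : Set B} (hS : RCP S) [EnoughProjectives B] (T : B) :
    ∃ (V S₀ : B) (k : V ⟶ S₀) (α : S₀ ⟶ T),
      IsSES k α ∧ IsRightApprox S α ∧ V ∈ rightPerp S := by
  obtain ⟨S₀, α, hα⟩ := hS.contra T
  obtain ⟨π', hπ'⟩ := hα.2 (hS.proj_mem (Projective.projective_over T)) (Projective.π T)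
  have : Epi α := epi_of_epi_fac hπ'
  exact ⟨_, _, _, _, .kernel_ι, hα, mem_rightPerp_of_isRightApprox hS.rigid hα .kernel_ι⟩

theorem RCP.exists_isSES_rightPerp {S : Set B} (hS : RCP S) [EnoughProjectives B]
    [EnoughInjectives B] (X : B) :
    ∃ (Z S' : B) (x : X ⟶ Z) (σ : Z ⟶ S'), IsSES x σ ∧ Z ∈ rightPerp S ∧ S' ∈ S := by
  obtain ⟨V, S₁, k, α, hkα, hα, hV⟩ := hS.exists_isSES_isRightApprox (cokernel (Injective.ι X))
  have hP := IsPullback.of_hasPullback (cokernel.π (Injective.ι X)) α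
  obtain ⟨x, -, hx⟩ := IsSES.cokernel_π.exists_isSES_of_isPullback hP
  obtain ⟨l, -, hl⟩ := hkα.exists_isSES_of_isPullback hP.flip
  exact ⟨_, S₁, x, _, hx, mem_rightPerp_of_isSES hl hV fun Y _ => ext1Zero_of_injective Y, hα.1⟩

theorem isRightApprox_coCone_of_isPullback {D C : Set B} {X Z E P : B} {d : E ⟶ Z}
    {x : X ⟶ Z} {fst : P ⟶ E} {snd : P ⟶ X} (hd : IsRightApprox D d) (hZ : Z ∈ rightPerp C)
    (hP : IsPullback fst snd d x) (hPmem : P ∈ CoCone D C) : IsRightApprox (CoCone D C) snd := by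
  refine ⟨hPmem, fun W ⟨D₀, C₀, j, q, hD₀, hC₀, hjq⟩ y => ?_⟩
  obtain ⟨t, ht⟩ := (hZ hC₀).exists_extend hjq (y ≫ x)
  obtain ⟨a, ha⟩ := hd.2 hD₀ t
  exact ⟨hP.lift (j ≫ a) y (by rw [assoc, ha, ht]), hP.lift_snd _ _ _⟩

/-- Pushing `0 → Y → E → C → 0` along `f ≫ x'` gives the pushout of `0 → X → Z → C → 0`
along `x'`; it splits since `f ≫ x'` extends along `i`. -/
theorem IsSES.exists_extend_of_comp_extend {Y E X Z C X' : B} {i : Y ⟶ E} {d : E ⟶ Z}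
    {σ : Z ⟶ C} {f : Y ⟶ X} {x : X ⟶ Z} (h : IsSES i (d ≫ σ)) (hxσ : IsSES x σ)
    (hsq : i ≫ d = f ≫ x) {x' : X ⟶ X'} {φ : E ⟶ X'} (hφ : i ≫ φ = f ≫ x') :
    ∃ t : Z ⟶ X', x ≫ t = x' := by
  have hQ := IsPushout.of_hasPushout x x'
  obtain ⟨δ, hδ, hQses⟩ := hxσ.exists_isSES_of_isPushout hQ
  obtain ⟨n, hn⟩ := h.exists_desc (d ≫ pushout.inl x x' - φ ≫ pushout.inr x x')
    (by rw [Preadditive.comp_sub, reassoc_of% hsq, reassoc_of% hφ, hQ.w, sub_self])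
  have hnδ : n ≫ δ = 𝟙 C := by
    have := h.epi
    rw [← cancel_epi (d ≫ σ), ← assoc, hn, Preadditive.sub_comp, assoc, assoc, hδ,
      hQses.zero, comp_zero, sub_zero, comp_id]
  obtain ⟨r, hr⟩ := hQses.exists_retraction_of_section hnδ
  exact ⟨pushout.inl x x' ≫ r, by rw [reassoc_of% hQ.w, hr, comp_id]⟩

theorem statement_4_general {B : Type u} [Category.{v} B] [Abelian B]
    [EnoughProjectives B] [EnoughInjectives B]
    (C D : Set B) (hC : RCP C) (hD : RCP D) :
    ∀ X : B, ∃ (Z Y : B) (i : Z ⟶ Y) (f : Y ⟶ X),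
      IsSES i f ∧ Y ∈ CoCone D C ∧ IsRightApprox (CoCone D C) f ∧ Z ∈ rightPerp D ∧
      (∀ ⦃X' : B⦄ (x' : X ⟶ X'), FactorsThru (rightPerp C) (f ≫ x') →
        FactorsThru (rightPerp C) x') := by
  intro X
  obtain ⟨Z, C', x, σ, hxσ, hZ, hC'⟩ := hC.exists_isSES_rightPerp X
  obtain ⟨W, D₁, k, d, hkd, hd, hW⟩ := hD.exists_isSES_isRightApprox Z
  have := hkd.epi
  have hP := IsPullback.of_hasPullback d x
  obtain ⟨l, -, hl⟩ := hkd.exists_isSES_of_isPullback hP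
  have hY := hxσ.isSES_fst_comp_of_isPullback hP
  have hYmem : pullback d x ∈ CoCone D C := ⟨D₁, C', _, _, hd.1, hC', hY⟩
  refine ⟨W, _, l, _, hl, hYmem, isRightApprox_coCone_of_isPullback hd hZ hP hYmem, hW, ?_⟩
  rintro X' x' ⟨Z₀, g, h, hZ₀, hgh⟩
  obtain ⟨g', hg'⟩ := (hZ₀ hC').exists_extend hY g
  obtain ⟨t, ht⟩ := hY.exists_extend_of_comp_extend hxσ hP.w (φ := g' ≫ h)
    (by rw [reassoc_of% hg', hgh])
  exact ⟨Z, x, t, hZ, ht⟩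

/-- right `ℋ_𝒟`-approximations with kernel in `𝒟^⊥¹`. -/
theorem statement_4 {B : Type u} [Category.{v} B] [Abelian B]
    [EnoughProjectives B] [EnoughInjectives B]
    (C D : Set B) (hC : RCP C) (hD : RCP D) (hDC : D ⊆ C) :
    ∀ X : B, ∃ (Z Y : B) (i : Z ⟶ Y) (f : Y ⟶ X),
      IsSES i f ∧ Y ∈ CoCone D C ∧ IsRightApprox (CoCone D C) f ∧ Z ∈ rightPerp D ∧
      (∀ ⦃X' : B⦄ (x' : X ⟶ X'), FactorsThru (rightPerp C) (f ≫ x') →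
        FactorsThru (rightPerp C) x') :=
  statement_4_general C D hC hD

end CotorsionPaper
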